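/- arXiv:1609.06641 — 3 statements merged into one kernel-verified Lean document; each statement's English description precedes it below -/
import Mathlib

section
/- For all m ≥ 1, the dyadic-ordered Hadamard matrix satisfies H_m = (∏_{r=1}^{m-1} I_{r-1} ⊗ [[I_{m-r}, 0], [0, Ψ_{m-r}]]) · Ψ_m, where the product is taken as M_{m-1}···M_2·M_1. -/
/-!
Split `Fin (2^(m+1))` into a lower and an upper half. In these blocks
`diag(A, H_m) · Ψ_{m+1} = (1/√2)·[AΨ_m ⊗ (1 1); H_m ⊗ (1 −1)]`,
which is `H_{m+1}` as soon as `AΨ_m = H_m`. Every CHW factor of size `2^(m+1)` except the last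
one is `diag(M, M)` for the corresponding factor `M` of size `2^m`, and the last one is
`diag(I, Ψ_m)`; so the product `P_{m+1}` equals `diag(P_m, P_m Ψ_m) = diag(P_m, H_m)` by
induction, and the first identity closes the step.
-/

open Matrix

/-- The `2^m × 2^m` dyadic (Paley) ordered Hadamard matrix:
`H_0 = (1)`, `H_{m+1} = (1/√2)·[H_m ⊗ (1 1); H_m ⊗ (1 −1)]`. -/
noncomputable def Had : (m : ℕ) → Matrix (Fin (2 ^ m)) (Fin (2 ^ m)) ℝ
  | 0 => fun _ _ => 1
  | m + 1 => fun i j =>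
      (1 / Real.sqrt 2) *
        (if h : (i : ℕ) < 2 ^ m then
            Had m ⟨i, h⟩ ⟨(j : ℕ) / 2, by have := j.isLt; have h2 : (2:ℕ)^(m+1) = 2^m*2 := pow_succ 2 m; omega⟩
          else
            Had m ⟨(i : ℕ) - 2 ^ m, by have := i.isLt; have h2 : (2:ℕ)^(m+1) = 2^m*2 := pow_succ 2 m; omega⟩
                ⟨(j : ℕ) / 2, by have := j.isLt; have h2 : (2:ℕ)^(m+1) = 2^m*2 := pow_succ 2 m; omega⟩ *
              (if (j : ℕ) % 2 = 0 then 1 else -1))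

/-- The `2^m × 2^m` Haar matrix:
`Ψ_0 = (1)`, `Ψ_{m+1} = (1/√2)·[Ψ_m ⊗ (1 1); I_m ⊗ (1 −1)]`. -/
noncomputable def Haar : (m : ℕ) → Matrix (Fin (2 ^ m)) (Fin (2 ^ m)) ℝ
  | 0 => fun _ _ => 1
  | m + 1 => fun i j =>
      (1 / Real.sqrt 2) *
        (if h : (i : ℕ) < 2 ^ m then
            Haar m ⟨i, h⟩ ⟨(j : ℕ) / 2, by have := j.isLt; have h2 : (2:ℕ)^(m+1) = 2^m*2 := pow_succ 2 m; omega⟩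
          else
            (if (i : ℕ) - 2 ^ m = (j : ℕ) / 2 then 1 else 0) *
              (if (j : ℕ) % 2 = 0 then 1 else -1))

/-- The block matrix `[[I_k, 0], [0, Ψ_k]]` of size `2^(k+1)`. -/
noncomputable def idBlockHaar (k : ℕ) : Matrix (Fin (2 ^ (k + 1))) (Fin (2 ^ (k + 1))) ℝ :=
  fun a b =>
    if (a : ℕ) < 2 ^ k then (if (a : ℕ) = (b : ℕ) then 1 else 0)
    else if (b : ℕ) < 2 ^ k then 0
    else
      Haar k ⟨(a : ℕ) - 2 ^ k, by have := a.isLt; have h2 : (2:ℕ)^(k+1) = 2^k*2 := pow_succ 2 k; omega⟩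
             ⟨(b : ℕ) - 2 ^ k, by have := b.isLt; have h2 : (2:ℕ)^(k+1) = 2^k*2 := pow_succ 2 k; omega⟩

/-- The factor `I_{r-1} ⊗ [[I_{m-r}, 0], [0, Ψ_{m-r}]]` of the CHW decomposition, viewed as a
`2^m × 2^m` matrix: a block-diagonal matrix with `2^(r-1)` copies of `[[I_{m-r},0],[0,Ψ_{m-r}]]`
(each of size `2^(m-r+1)`) along the diagonal. -/
noncomputable def chwFactor (m r : ℕ) : Matrix (Fin (2 ^ m)) (Fin (2 ^ m)) ℝ :=
  fun i j =>
    if (i : ℕ) / 2 ^ (m - r + 1) = (j : ℕ) / 2 ^ (m - r + 1) then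
      idBlockHaar (m - r)
        ⟨(i : ℕ) % 2 ^ (m - r + 1), Nat.mod_lt _ (Nat.pow_pos (by norm_num))⟩
        ⟨(j : ℕ) % 2 ^ (m - r + 1), Nat.mod_lt _ (Nat.pow_pos (by norm_num))⟩
    else 0

section DyadicBlocks

variable {α : Type*} {m : ℕ}

def finTwoPowSuccEquiv (m : ℕ) : Fin (2 ^ m) ⊕ Fin (2 ^ m) ≃ Fin (2 ^ (m + 1)) :=
  finSumFinEquiv.trans (finCongr (Nat.two_pow_succ m).symm)

@[simp] lemma val_finTwoPowSuccEquiv_inl (a : Fin (2 ^ m)) :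
    (finTwoPowSuccEquiv m (.inl a) : ℕ) = a := rfl

@[simp] lemma val_finTwoPowSuccEquiv_inr (a : Fin (2 ^ m)) :
    (finTwoPowSuccEquiv m (.inr a) : ℕ) = 2 ^ m + a := rfl

def dyadicBlockDiag [Zero α] (A B : Matrix (Fin (2 ^ m)) (Fin (2 ^ m)) α) :
    Matrix (Fin (2 ^ (m + 1))) (Fin (2 ^ (m + 1))) α :=
  reindex (finTwoPowSuccEquiv m) (finTwoPowSuccEquiv m) (fromBlocks A 0 0 B)

@[simp] lemma dyadicBlockDiag_apply [Zero α] (A B : Matrix (Fin (2 ^ m)) (Fin (2 ^ m)) α)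
    (i j : Fin (2 ^ m) ⊕ Fin (2 ^ m)) :
    dyadicBlockDiag A B (finTwoPowSuccEquiv m i) (finTwoPowSuccEquiv m j) =
      fromBlocks A 0 0 B i j := by
  simp [dyadicBlockDiag]

lemma dyadicBlockDiag_one [Zero α] [One α] :
    dyadicBlockDiag (1 : Matrix (Fin (2 ^ m)) (Fin (2 ^ m)) α) 1 = 1 := by
  simp [dyadicBlockDiag, fromBlocks_one]

lemma dyadicBlockDiag_mul [NonUnitalNonAssocSemiring α]
    (A B C D : Matrix (Fin (2 ^ m)) (Fin (2 ^ m)) α) :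
    dyadicBlockDiag A B * dyadicBlockDiag C D = dyadicBlockDiag (A * C) (B * D) := by
  simp [dyadicBlockDiag, reindex_apply, submatrix_mul_equiv, fromBlocks_multiply]

lemma list_prod_map_dyadicBlockDiag_self [Semiring α]
    (L : List (Matrix (Fin (2 ^ m)) (Fin (2 ^ m)) α)) :
    (L.map fun X => dyadicBlockDiag X X).prod = dyadicBlockDiag L.prod L.prod := by
  induction L with
  | nil => exact dyadicBlockDiag_one.symm
  | cons X L ih => simp [ih, dyadicBlockDiag_mul]

lemma dyadicBlockDiag_mul_apply_inl [NonUnitalNonAssocSemiring α] {ι : Type*}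
    (A B : Matrix (Fin (2 ^ m)) (Fin (2 ^ m)) α) (M : Matrix (Fin (2 ^ (m + 1))) ι α)
    (a : Fin (2 ^ m)) (j : ι) :
    (dyadicBlockDiag A B * M) (finTwoPowSuccEquiv m (.inl a)) j =
      ∑ k, A a k * M (finTwoPowSuccEquiv m (.inl k)) j := by
  rw [mul_apply, ← (finTwoPowSuccEquiv m).sum_comp, Fintype.sum_sum_type]
  simp

lemma dyadicBlockDiag_mul_apply_inr [NonUnitalNonAssocSemiring α] {ι : Type*}
    (A B : Matrix (Fin (2 ^ m)) (Fin (2 ^ m)) α) (M : Matrix (Fin (2 ^ (m + 1))) ι α)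
    (a : Fin (2 ^ m)) (j : ι) :
    (dyadicBlockDiag A B * M) (finTwoPowSuccEquiv m (.inr a)) j =
      ∑ k, B a k * M (finTwoPowSuccEquiv m (.inr k)) j := by
  rw [mul_apply, ← (finTwoPowSuccEquiv m).sum_comp, Fintype.sum_sum_type]
  simp

end DyadicBlocks

section BlockDiagRepeat

variable {α : Type*} [Zero α] {n : ℕ} [NeZero n]

/-- `I_{N/n} ⊗ M` when `n ∣ N`. -/
def blockDiagRepeat (N : ℕ) (M : Matrix (Fin n) (Fin n) α) : Matrix (Fin N) (Fin N) α :=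
  of fun i j =>
    if (i : ℕ) / n = j / n then
      M ⟨i % n, Nat.mod_lt _ (NeZero.pos n)⟩ ⟨j % n, Nat.mod_lt _ (NeZero.pos n)⟩
    else 0

lemma blockDiagRepeat_self (M : Matrix (Fin n) (Fin n) α) : blockDiagRepeat n M = M := by
  ext i j
  simp [blockDiagRepeat, Nat.div_eq_of_lt i.isLt, Nat.div_eq_of_lt j.isLt,
    Nat.mod_eq_of_lt i.isLt, Nat.mod_eq_of_lt j.isLt]

lemma dyadicBlockDiag_blockDiagRepeat {m : ℕ} (M : Matrix (Fin n) (Fin n) α) (h : n ∣ 2 ^ m) :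
    dyadicBlockDiag (blockDiagRepeat (2 ^ m) M) (blockDiagRepeat (2 ^ m) M) =
      blockDiagRepeat (2 ^ (m + 1)) M := by
  obtain ⟨c, hc⟩ := h
  have hn := NeZero.pos n
  have shift (b : ℕ) : (2 ^ m + b) / n = c + b / n ∧ (2 ^ m + b) % n = b % n := by
    rw [hc, Nat.mul_add_div hn, Nat.mul_add_mod]
    exact ⟨rfl, rfl⟩
  have low (a : Fin (2 ^ m)) : (a : ℕ) / n < c := by
    rw [Nat.div_lt_iff_lt_mul hn, mul_comm, ← hc]; exact a.isLt
  ext i j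
  obtain ⟨i, rfl⟩ := (finTwoPowSuccEquiv m).surjective i
  obtain ⟨j, rfl⟩ := (finTwoPowSuccEquiv m).surjective j
  rcases i with a | a <;> rcases j with b | b
  · simp [blockDiagRepeat]; rfl
  · simp [blockDiagRepeat, (shift b).1, (Nat.lt_add_right _ (low a)).ne]
  · simp [blockDiagRepeat, (shift a).1, (Nat.lt_add_right _ (low b)).ne']
  · simp [blockDiagRepeat, shift]

end BlockDiagRepeat

section HadamardHaar

variable {m : ℕ}

def finHalf (j : Fin (2 ^ (m + 1))) : Fin (2 ^ m) :=
  ⟨j / 2, by have := j.isLt; have := Nat.two_pow_succ m; omega⟩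

lemma haar_zero : Haar 0 = 1 := by
  ext i j
  obtain rfl : i = j := Fin.ext (by have := i.isLt; have := j.isLt; simp at *)
  simp [Haar]

lemma had_zero : Had 0 = 1 := by
  ext i j
  obtain rfl : i = j := Fin.ext (by have := i.isLt; have := j.isLt; simp at *)
  simp [Had]

lemma haar_succ_apply_inl (a : Fin (2 ^ m)) (j : Fin (2 ^ (m + 1))) :
    Haar (m + 1) (finTwoPowSuccEquiv m (.inl a)) j = 1 / √2 * Haar m a (finHalf j) := by
  simp [Haar, finHalf]

lemma haar_succ_apply_inr (a : Fin (2 ^ m)) (j : Fin (2 ^ (m + 1))) :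
    Haar (m + 1) (finTwoPowSuccEquiv m (.inr a)) j =
      1 / √2 * ((if a = finHalf j then 1 else 0) * (if (j : ℕ) % 2 = 0 then 1 else -1)) := by
  simp [Haar, finHalf, Fin.ext_iff]

lemma had_succ_apply_inl (a : Fin (2 ^ m)) (j : Fin (2 ^ (m + 1))) :
    Had (m + 1) (finTwoPowSuccEquiv m (.inl a)) j = 1 / √2 * Had m a (finHalf j) := by
  simp [Had, finHalf]

lemma had_succ_apply_inr (a : Fin (2 ^ m)) (j : Fin (2 ^ (m + 1))) :
    Had (m + 1) (finTwoPowSuccEquiv m (.inr a)) j =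
      1 / √2 * (Had m a (finHalf j) * (if (j : ℕ) % 2 = 0 then 1 else -1)) := by
  simp [Had, finHalf]

lemma idBlockHaar_eq_dyadicBlockDiag (m : ℕ) : idBlockHaar m = dyadicBlockDiag 1 (Haar m) := by
  ext i j
  obtain ⟨i, rfl⟩ := (finTwoPowSuccEquiv m).surjective i
  obtain ⟨j, rfl⟩ := (finTwoPowSuccEquiv m).surjective j
  rcases i with a | a <;> rcases j with b | b
  · simp [idBlockHaar, one_apply, Fin.ext_iff]
    rfl
  · simp [idBlockHaar, show (a : ℕ) ≠ 2 ^ m + b by omega]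
  · simp [idBlockHaar]
  · simp [idBlockHaar]

lemma dyadicBlockDiag_had_mul_haar_succ (A : Matrix (Fin (2 ^ m)) (Fin (2 ^ m)) ℝ)
    (hA : A * Haar m = Had m) : dyadicBlockDiag A (Had m) * Haar (m + 1) = Had (m + 1) := by
  ext i j
  obtain ⟨i, rfl⟩ := (finTwoPowSuccEquiv m).surjective i
  rcases i with a | a
  · rw [dyadicBlockDiag_mul_apply_inl, had_succ_apply_inl, ← hA, mul_apply, Finset.mul_sum]
    simp only [haar_succ_apply_inl, mul_left_comm]
  · simp [dyadicBlockDiag_mul_apply_inr, haar_succ_apply_inr, had_succ_apply_inr, mul_comm]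

end HadamardHaar

lemma chwFactor_eq_blockDiagRepeat (m r : ℕ) :
    chwFactor m r = blockDiagRepeat (2 ^ m) (idBlockHaar (m - r)) :=
  rfl

lemma had_succ_eq_prod_mul_haar (m : ℕ) :
    Had (m + 1) = ((List.range m).map fun k =>
      blockDiagRepeat (2 ^ (m + 1)) (idBlockHaar (k + 1))).prod * Haar (m + 1) := by
  induction m with
  | zero =>
    rw [List.range_zero, List.map_nil, List.prod_nil, one_mul,
      ← dyadicBlockDiag_had_mul_haar_succ 1 (by rw [one_mul, haar_zero, had_zero]),
      had_zero, dyadicBlockDiag_one, one_mul]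
  | succ m ih =>
    set P := ((List.range m).map fun k => blockDiagRepeat (2 ^ (m + 1)) (idBlockHaar (k + 1))).prod
    have doubled : ((List.range m).map fun k =>
        blockDiagRepeat (2 ^ (m + 2)) (idBlockHaar (k + 1))).prod = dyadicBlockDiag P P := by
      rw [← list_prod_map_dyadicBlockDiag_self, List.map_map]
      refine congrArg List.prod (List.map_congr_left fun k hk => ?_)
      exact (dyadicBlockDiag_blockDiagRepeat _
        (pow_dvd_pow 2 (by simpa using List.mem_range.mp hk))).symm
    rw [List.range_succ, List.map_append, List.prod_append, doubled, List.map_singleton,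
      List.prod_singleton, blockDiagRepeat_self, idBlockHaar_eq_dyadicBlockDiag,
      dyadicBlockDiag_mul, mul_one, ← ih, dyadicBlockDiag_had_mul_haar_succ P ih.symm]

theorem chw_decomposition_general (m : ℕ) :
    Had m = (((List.range (m - 1)).map fun k => chwFactor m (m - 1 - k)).prod) * Haar m := by
  cases m with
  | zero => rw [had_zero, haar_zero, List.range_zero, List.map_nil, List.prod_nil, one_mul]
  | succ m =>
    rw [had_succ_eq_prod_mul_haar, Nat.add_sub_cancel]
    congr 2
    refine List.map_congr_left fun k hk => ?_
    have hk : k < m := List.mem_range.mp hk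
    rw [chwFactor_eq_blockDiagRepeat, show m + 1 - (m - k) = k + 1 by omega]

/-- **CHW decomposition** (Theorem 1): for all `m ≥ 1`,
`H_m = (∏_{r=1}^{m-1} I_{r-1} ⊗ [[I_{m-r},0],[0,Ψ_{m-r}]]) · Ψ_m`,
where the product is `M_{m-1} ⋯ M_2 M_1`. -/
theorem chw_decomposition (m : ℕ) (hm : 1 ≤ m) :
    Had m = (((List.range (m - 1)).map fun k => chwFactor m (m - 1 - k)).prod) * Haar m :=
  chw_decomposition_general m
end

section
/- For all m ≥ 1, H_m · Ψ_mᵀ is the block diagonal matrix diag(1, H_0, H_1, …, H_{m-1}), where the block H_k occupies rows and columns indexed 2^k … 2^{k+1}−1 (0-indexed). -/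
open Matrix

/-- The block diagonal matrix `diag(1, H_0, H_1, …, H_{m-1})` of size `2^m`, where for `k ≥ 0`
the block `H_k` occupies rows and columns `2^k, …, 2^(k+1) - 1` (0-indexed).  For a nonzero
index `i`, the block containing it is `k = Nat.log 2 i`, i.e. `2^k ≤ i < 2^(k+1)`. -/
noncomputable def haarWalshDiag (m : ℕ) : Matrix (Fin (2 ^ m)) (Fin (2 ^ m)) ℝ :=
  fun i j =>
    if hi : (i : ℕ) = 0 then (if (j : ℕ) = 0 then 1 else 0)
    else if hj : (j : ℕ) = 0 then 0
    else if hk : Nat.log 2 (j : ℕ) = Nat.log 2 (i : ℕ) then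
      Had (Nat.log 2 (i : ℕ))
        ⟨(i : ℕ) - 2 ^ Nat.log 2 (i : ℕ), by
          have h1 : 2 ^ Nat.log 2 (i : ℕ) ≤ (i : ℕ) := Nat.pow_log_le_self 2 hi
          have h2 : (i : ℕ) < 2 ^ (Nat.log 2 (i : ℕ) + 1) :=
            Nat.lt_pow_succ_log_self (by norm_num) _
          have h3 : (2 : ℕ) ^ (Nat.log 2 (i : ℕ) + 1) = 2 ^ Nat.log 2 (i : ℕ) * 2 :=
            pow_succ 2 _
          omega⟩
        ⟨(j : ℕ) - 2 ^ Nat.log 2 (i : ℕ), by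
          have h1 : 2 ^ Nat.log 2 (j : ℕ) ≤ (j : ℕ) := Nat.pow_log_le_self 2 hj
          have h2 : (j : ℕ) < 2 ^ (Nat.log 2 (j : ℕ) + 1) :=
            Nat.lt_pow_succ_log_self (by norm_num) _
          rw [hk] at h1 h2
          have h3 : (2 : ℕ) ^ (Nat.log 2 (i : ℕ) + 1) = 2 ^ Nat.log 2 (i : ℕ) * 2 :=
            pow_succ 2 _
          omega⟩
    else 0

/-! Both recursions interleave columns as a Kronecker product with a row `(1, ±1)`: the top half
of `H_{m+1}` and `Ψ_{m+1}` uses `(1, 1)`, the bottom half `(1, -1)`. As `(1, 1)` and `(1, -1)` are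
orthogonal of squared norm `2`, rows from different halves of `H_{m+1}` and `Ψ_{m+1}` are
orthogonal, while within a half the two factors `1/√2` cancel against that `2`. Hence
`H_{m+1} Ψ_{m+1}ᵀ = diag(H_m Ψ_mᵀ, H_m I_m)`, and induction on `m` gives the block diagonal. -/

variable {m : ℕ}

namespace Fin

def divTwo (k : Fin (2 ^ (m + 1))) : Fin (2 ^ m) :=
  ⟨k / 2, Nat.div_lt_of_lt_mul (pow_succ' 2 m ▸ k.isLt)⟩

def modTwoPow (i : Fin (2 ^ (m + 1))) : Fin (2 ^ m) :=
  ⟨i % 2 ^ m, Nat.mod_lt _ (by positivity)⟩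

theorem modTwoPow_of_lt {i : Fin (2 ^ (m + 1))} (hi : (i : ℕ) < 2 ^ m) :
    i.modTwoPow = ⟨i, hi⟩ :=
  Fin.ext (Nat.mod_eq_of_lt hi)

theorem val_modTwoPow_of_le {i : Fin (2 ^ (m + 1))} (hi : 2 ^ m ≤ (i : ℕ)) :
    (i.modTwoPow : ℕ) = i - 2 ^ m := by
  change (i : ℕ) % 2 ^ m = i - 2 ^ m
  rw [Nat.mod_eq_sub_mod hi, Nat.mod_eq_of_lt (by have := pow_succ' 2 m; omega)]

theorem modTwoPow_of_le {i : Fin (2 ^ (m + 1))} (hi : 2 ^ m ≤ (i : ℕ)) :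
    i.modTwoPow = ⟨i - 2 ^ m, by have := pow_succ' 2 m; omega⟩ :=
  Fin.ext (val_modTwoPow_of_le hi)

theorem sum_two_pow_succ {M : Type*} [AddCommMonoid M] (F : Fin (2 ^ (m + 1)) → M) :
    ∑ k, F k = ∑ q : Fin (2 ^ m),
      (F ⟨2 * q, by have := pow_succ' 2 m; omega⟩ +
        F ⟨2 * q + 1, by have := pow_succ' 2 m; omega⟩) := by
  rw [← (finProdFinEquiv.trans (finCongr (pow_succ 2 m).symm)).sum_comp, Fintype.sum_prod_type]
  refine Finset.sum_congr rfl fun q _ => ?_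
  rw [Fin.sum_univ_two]
  congr 2 <;> ext <;> simp [add_comm, mul_comm]

end Fin

theorem sum_kron_mul_kron {R : Type*} [CommRing R] (u v : Fin (2 ^ m) → R) (s t : R) :
    ∑ k : Fin (2 ^ (m + 1)),
        (u k.divTwo * if (k : ℕ) % 2 = 0 then 1 else s) *
          (v k.divTwo * if (k : ℕ) % 2 = 0 then 1 else t) =
      (1 + s * t) * ∑ q, u q * v q := by
  rw [Fin.sum_two_pow_succ, Finset.mul_sum]
  refine Finset.sum_congr rfl fun q _ => ?_
  have hev : (⟨2 * q, by omega⟩ : Fin (2 ^ (m + 1))).divTwo = q := Fin.ext (by simp [Fin.divTwo])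
  have hodd : (⟨2 * q + 1, by omega⟩ : Fin (2 ^ (m + 1))).divTwo = q :=
    Fin.ext (by simp [Fin.divTwo]; omega)
  simp only [hev, hodd, Nat.mul_mod_right, Nat.mul_add_mod, Nat.one_mod, one_ne_zero, if_true,
    if_false]
  ring

theorem Had_congr {a b : ℕ} (h : a = b) {x y : Fin (2 ^ a)} {x' y' : Fin (2 ^ b)}
    (hx : (x : ℕ) = x') (hy : (y : ℕ) = y') : Had a x y = Had b x' y' := by
  subst h
  rw [Fin.ext hx, Fin.ext hy]

theorem Had_succ_apply (i k : Fin (2 ^ (m + 1))) :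
    Had (m + 1) i k = 1 / √2 * (Had m i.modTwoPow k.divTwo *
      if (k : ℕ) % 2 = 0 then 1 else if (i : ℕ) < 2 ^ m then 1 else -1) := by
  rw [Had]
  by_cases hi : (i : ℕ) < 2 ^ m
  · simp [hi, Fin.modTwoPow_of_lt hi, Fin.divTwo]
  · simp [hi, Fin.modTwoPow_of_le (not_lt.mp hi), Fin.divTwo]

/-- The stacked matrix `[Ψ_m; I_m]`. -/
noncomputable def haarStack (m : ℕ) : Matrix (Fin (2 ^ (m + 1))) (Fin (2 ^ m)) ℝ :=
  fun j => if h : (j : ℕ) < 2 ^ m then Haar m ⟨j, h⟩ else (1 : Matrix (Fin (2 ^ m)) _ ℝ) j.modTwoPow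

theorem Haar_succ_apply (j k : Fin (2 ^ (m + 1))) :
    Haar (m + 1) j k = 1 / √2 * (haarStack m j k.divTwo *
      if (k : ℕ) % 2 = 0 then 1 else if (j : ℕ) < 2 ^ m then 1 else -1) := by
  rw [Haar]
  by_cases hj : (j : ℕ) < 2 ^ m
  · simp [hj, haarStack, Fin.divTwo]
  · simp [hj, haarStack, Fin.divTwo, one_apply, Fin.ext_iff,
      Fin.val_modTwoPow_of_le (not_lt.mp hj)]

theorem mul_haarStack_transpose_apply_of_lt {n : Type*} (A : Matrix n (Fin (2 ^ m)) ℝ) (a : n)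
    {j : Fin (2 ^ (m + 1))} (hj : (j : ℕ) < 2 ^ m) :
    (A * (haarStack m)ᵀ) a j = (A * (Haar m)ᵀ) a ⟨j, hj⟩ := by
  simp [mul_apply, haarStack, hj]

theorem mul_haarStack_transpose_apply_of_le {n : Type*} (A : Matrix n (Fin (2 ^ m)) ℝ) (a : n)
    {j : Fin (2 ^ (m + 1))} (hj : 2 ^ m ≤ (j : ℕ)) :
    (A * (haarStack m)ᵀ) a j = A a j.modTwoPow := by
  simp [mul_apply, haarStack, not_lt.mpr hj, one_apply]

theorem Had_mul_Haar_transpose_succ_apply (i j : Fin (2 ^ (m + 1))) :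
    (Had (m + 1) * (Haar (m + 1))ᵀ) i j =
      if ((i : ℕ) < 2 ^ m ↔ (j : ℕ) < 2 ^ m) then (Had m * (haarStack m)ᵀ) i.modTwoPow j
      else 0 := by
  set s : ℝ := if (i : ℕ) < 2 ^ m then 1 else -1
  set t : ℝ := if (j : ℕ) < 2 ^ m then 1 else -1
  have hst : 1 / √2 * (1 / √2) * (1 + s * t) =
      if ((i : ℕ) < 2 ^ m ↔ (j : ℕ) < 2 ^ m) then 1 else 0 := by
    rw [div_mul_div_comm, one_mul, Real.mul_self_sqrt zero_le_two]
    by_cases hi : (i : ℕ) < 2 ^ m <;> by_cases hj : (j : ℕ) < 2 ^ m <;> norm_num [s, t, hi, hj]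
  simp only [mul_apply, transpose_apply, Had_succ_apply, Haar_succ_apply]
  calc _ = 1 / √2 * (1 / √2) * ∑ k : Fin (2 ^ (m + 1)),
        (Had m i.modTwoPow k.divTwo * if (k : ℕ) % 2 = 0 then 1 else s) *
          (haarStack m j k.divTwo * if (k : ℕ) % 2 = 0 then 1 else t) := by
        rw [Finset.mul_sum]; congr! 1; ring
    _ = _ := by rw [sum_kron_mul_kron, ← mul_assoc, hst]; split_ifs <;> simp

theorem haarWalshDiag_succ_of_lt_of_lt {i j : Fin (2 ^ (m + 1))} (hi : (i : ℕ) < 2 ^ m)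
    (hj : (j : ℕ) < 2 ^ m) : haarWalshDiag (m + 1) i j = haarWalshDiag m ⟨i, hi⟩ ⟨j, hj⟩ :=
  rfl

theorem haarWalshDiag_succ_of_le_of_le {i j : Fin (2 ^ (m + 1))} (hi : 2 ^ m ≤ (i : ℕ))
    (hj : 2 ^ m ≤ (j : ℕ)) : haarWalshDiag (m + 1) i j = Had m i.modTwoPow j.modTwoPow := by
  have hpos : 0 < 2 ^ m := by positivity
  have hlog {k : Fin (2 ^ (m + 1))} (hk : 2 ^ m ≤ (k : ℕ)) : Nat.log 2 k = m :=
    Nat.log_eq_of_pow_le_of_lt_pow hk k.isLt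
  unfold haarWalshDiag
  rw [dif_neg (by omega), dif_neg (by omega), dif_pos (by rw [hlog hi, hlog hj])]
  exact Had_congr (hlog hi) (by dsimp only; rw [Fin.val_modTwoPow_of_le hi, hlog hi])
    (by dsimp only; rw [Fin.val_modTwoPow_of_le hj, hlog hi])

theorem haarWalshDiag_succ_of_not_iff {i j : Fin (2 ^ (m + 1))}
    (h : ¬((i : ℕ) < 2 ^ m ↔ (j : ℕ) < 2 ^ m)) : haarWalshDiag (m + 1) i j = 0 := by
  have hlog {k : Fin (2 ^ (m + 1))} (hk : (k : ℕ) ≠ 0) : Nat.log 2 k < m ↔ (k : ℕ) < 2 ^ m :=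
    Nat.log_lt_iff_lt_pow one_lt_two hk
  have hpos : 0 < 2 ^ m := by positivity
  unfold haarWalshDiag
  split_ifs with hi0 _ hj0 hk
  · exact absurd (iff_of_true (by omega) (by omega)) h
  all_goals first
    | rfl
    | exact absurd (by rw [← hlog hi0, ← hlog hj0, hk]) h

theorem haar_walsh_block_diagonal_general (m : ℕ) :
    Had m * (Haar m)ᵀ = haarWalshDiag m := by
  induction m with
  | zero =>
    ext i j
    simp only [mul_apply, transpose_apply]
    simp [Had, Haar, haarWalshDiag, Fin.val_eq_zero]
  | succ m ih =>
    ext i j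
    rw [Had_mul_Haar_transpose_succ_apply]
    by_cases h : (i : ℕ) < 2 ^ m ↔ (j : ℕ) < 2 ^ m
    · rw [if_pos h]
      by_cases hi : (i : ℕ) < 2 ^ m
      · have hj := h.mp hi
        rw [mul_haarStack_transpose_apply_of_lt _ _ hj, Fin.modTwoPow_of_lt hi, ih,
          haarWalshDiag_succ_of_lt_of_lt hi hj]
      · have hj := mt h.mpr hi
        rw [mul_haarStack_transpose_apply_of_le _ _ (not_lt.mp hj),
          haarWalshDiag_succ_of_le_of_le (not_lt.mp hi) (not_lt.mp hj)]
    · rw [if_neg h, haarWalshDiag_succ_of_not_iff h]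

/-- For all `m ≥ 1`, `H_m · Ψ_mᵀ` is the block diagonal matrix
`diag(1, H_0, H_1, …, H_{m-1})`, the block `H_k` occupying rows and columns
`2^k, …, 2^(k+1) - 1`. -/
theorem haar_walsh_block_diagonal (m : ℕ) (hm : 1 ≤ m) :
    Had m * (Haar m)ᵀ = haarWalshDiag m :=
  haar_walsh_block_diagonal_general m
end

section
/- For all m ≥ 1, the matrix H_m·Ψ_mᵀ satisfies the recursion H_{m+1}·Ψ_{m+1}ᵀ = [[H_m·Ψ_mᵀ, 0],[0, H_m]] (block diagonal with the previous Haar–Walsh matrix in the top-left and H_m in the bottom-right). -/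
/-! Index the columns of the level-`m+1` matrices dyadically as `2a + b` with `b ∈ {0, 1}` and
split their rows into a top and a bottom half. Then `H_{m+1}` has the rows `H_m ⊗ ℓ` and
`H_m ⊗ h`, and `Ψ_{m+1}` the rows `Ψ_m ⊗ ℓ` and `I ⊗ h`, where `ℓ = (1, 1)/√2` and
`h = (1, −1)/√2` are orthonormal. By the mixed product rule each block of `H_{m+1} Ψ_{m+1}ᵀ` is
a product of level-`m` blocks times an inner product of filters, which gives
`[[H_m Ψ_mᵀ, 0], [0, H_m]]`. -/

open Matrix

namespace Matrix

variable {ι κ ν μ R : Type*} [CommSemiring R]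

def kroneckerRow (A : Matrix ι κ R) (w : μ → R) : Matrix ι (κ × μ) R :=
  of fun i j => A i j.1 * w j.2

@[simp]
theorem kroneckerRow_apply (A : Matrix ι κ R) (w : μ → R) (i : ι) (a : κ) (b : μ) :
    kroneckerRow A w i (a, b) = A i a * w b :=
  rfl

theorem kroneckerRow_mul_transpose_kroneckerRow [Fintype κ] [Fintype μ] (A : Matrix ι κ R)
    (C : Matrix ν κ R) (w z : μ → R) :
    kroneckerRow A w * (kroneckerRow C z)ᵀ = (w ⬝ᵥ z) • (A * Cᵀ) := by
  ext i k
  simp only [mul_apply, transpose_apply, smul_apply, smul_eq_mul, dotProduct,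
    Fintype.sum_prod_type, kroneckerRow_apply, Finset.sum_mul, Finset.mul_sum]
  refine Finset.sum_congr rfl fun a _ => Finset.sum_congr rfl fun b _ => ?_
  ring

end Matrix

noncomputable def lowPass : Fin 2 → ℝ := ![1 / √2, 1 / √2]

noncomputable def highPass : Fin 2 → ℝ := ![1 / √2, -(1 / √2)]

theorem lowPass_dotProduct_lowPass : lowPass ⬝ᵥ lowPass = 1 := by
  norm_num [lowPass, dotProduct, Fin.sum_univ_two, ← mul_inv]

theorem lowPass_dotProduct_highPass : lowPass ⬝ᵥ highPass = 0 := by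
  norm_num [lowPass, highPass, dotProduct, Fin.sum_univ_two]

theorem highPass_dotProduct_lowPass : highPass ⬝ᵥ lowPass = 0 := by
  norm_num [lowPass, highPass, dotProduct, Fin.sum_univ_two]

theorem highPass_dotProduct_highPass : highPass ⬝ᵥ highPass = 1 := by
  norm_num [highPass, dotProduct, Fin.sum_univ_two, ← mul_inv]

def halvesEquiv (m : ℕ) : Fin (2 ^ m) ⊕ Fin (2 ^ m) ≃ Fin (2 ^ (m + 1)) :=
  finSumFinEquiv.trans (finCongr (by rw [← two_mul, ← pow_succ']))

@[simp]
theorem halvesEquiv_inl_val (m : ℕ) (i : Fin (2 ^ m)) : (halvesEquiv m (.inl i) : ℕ) = i :=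
  rfl

@[simp]
theorem halvesEquiv_inr_val (m : ℕ) (i : Fin (2 ^ m)) :
    (halvesEquiv m (.inr i) : ℕ) = 2 ^ m + i :=
  rfl

def dyadicEquiv (m : ℕ) : Fin (2 ^ m) × Fin 2 ≃ Fin (2 ^ (m + 1)) :=
  finProdFinEquiv.trans (finCongr (pow_succ 2 m).symm)

theorem dyadicEquiv_val (m : ℕ) (a : Fin (2 ^ m)) (b : Fin 2) :
    (dyadicEquiv m (a, b) : ℕ) = b + 2 * a :=
  rfl

@[simp]
theorem dyadicEquiv_val_div_two (m : ℕ) (a : Fin (2 ^ m)) (b : Fin 2) :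
    (dyadicEquiv m (a, b) : ℕ) / 2 = a := by
  rw [dyadicEquiv_val]
  omega

@[simp]
theorem dyadicEquiv_val_mod_two (m : ℕ) (a : Fin (2 ^ m)) (b : Fin 2) :
    (dyadicEquiv m (a, b) : ℕ) % 2 = b := by
  rw [dyadicEquiv_val]
  omega

theorem had_succ_submatrix (m : ℕ) :
    (Had (m + 1)).submatrix (halvesEquiv m) (dyadicEquiv m) =
      fromRows (kroneckerRow (Had m) lowPass) (kroneckerRow (Had m) highPass) := by
  ext (i | i) ⟨a, b⟩ <;> rw [submatrix_apply] <;> fin_cases b <;>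
    simp [Had, lowPass, highPass, mul_comm]

theorem haar_succ_submatrix (m : ℕ) :
    (Haar (m + 1)).submatrix (halvesEquiv m) (dyadicEquiv m) =
      fromRows (kroneckerRow (Haar m) lowPass) (kroneckerRow 1 highPass) := by
  ext (i | i) ⟨a, b⟩ <;> rw [submatrix_apply] <;> fin_cases b <;>
    simp [Haar, lowPass, highPass, one_apply, Fin.val_inj, mul_comm]

/-- The Haar–Walsh matrix recursion: for all `m ≥ 1`,
`H_{m+1} · Ψ_{m+1}ᵀ = [[H_m · Ψ_mᵀ, 0], [0, H_m]]` (block diagonal). -/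
theorem haar_walsh_recursion (m : ℕ) :
    Had (m + 1) * (Haar (m + 1))ᵀ =
      Matrix.reindex
        (finSumFinEquiv.trans (finCongr (by rw [← two_mul, ← pow_succ'])))
        (finSumFinEquiv.trans (finCongr (by rw [← two_mul, ← pow_succ'])))
        (Matrix.fromBlocks (Had m * (Haar m)ᵀ) 0 0 (Had m)) := by
  change _ = reindex (halvesEquiv m) (halvesEquiv m) _
  rw [← Equiv.symm_apply_eq, reindex_symm, reindex_apply, Equiv.symm_symm,
    ← submatrix_mul_equiv _ _ _ (dyadicEquiv m), ← transpose_submatrix, had_succ_submatrix,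
    haar_succ_submatrix, transpose_fromRows, fromRows_mul_fromCols]
  simp only [kroneckerRow_mul_transpose_kroneckerRow, lowPass_dotProduct_lowPass,
    lowPass_dotProduct_highPass, highPass_dotProduct_lowPass, highPass_dotProduct_highPass,
    one_smul, zero_smul, transpose_one, mul_one]
end
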